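/- arXiv:2302.08837 — 7 statements merged into one kernel-verified Lean document; each statement's English description precedes it below -/
import Mathlib

section
/- Fix a context Ω in the simple theory of signatures and let T = Tm Ω ι. For every context Γ, every type A, every term t : Tm Γ A and every substitution ν : Sub Ω Γ, the term-algebra interpretation commutes with substitution and evaluation: A^T (t[ν]) = t^A (Γ^T ν). -/
namespace ToS

inductive Ty : Type where
  | iota : Ty
  | arr : Ty → Ty

inductive Con : Type where
  | nil : Con
  | ext : Con → Ty → Con

inductive Var : Con → Ty → Type where
  | vz : {Γ : Con} → {A : Ty} → Var (Con.ext Γ A) A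
  | vs : {Γ : Con} → {A B : Ty} → Var Γ A → Var (Con.ext Γ B) A

inductive Tm : Con → Ty → Type where
  | var : {Γ : Con} → {A : Ty} → Var Γ A → Tm Γ A
  | app : {Γ : Con} → {A : Ty} → Tm Γ (Ty.arr A) → Tm Γ Ty.iota → Tm Γ A

/-- Substitutions map variables to terms. -/
def Sub (Γ Δ : Con) : Type := ∀ A : Ty, Var Δ A → Tm Γ A

/-- Action of substitution on terms: `t[σ]`. -/
def subTm {Γ Δ : Con} : {A : Ty} → Tm Δ A → Sub Γ Δ → Tm Γ A
  | _, .var x, σ => σ _ x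
  | _, .app t u, σ => .app (subTm t σ) (subTm u σ)

/-- Identity substitution. -/
def idSub (Γ : Con) : Sub Γ Γ := fun _ x => Tm.var x

/-- Composition of substitutions. -/
def compSub {Γ Δ Ξ : Con} (σ : Sub Δ Ξ) (δ : Sub Γ Δ) : Sub Γ Ξ :=
  fun _ x => subTm (σ _ x) δ

/-- Algebra interpretation of types: `A^A X`. -/
def TyA : Ty → Type → Type
  | .iota, X => X
  | .arr A, X => X → TyA A X

/-- Algebra interpretation of contexts: `Γ^A X`. -/
def ConA (Γ : Con) (X : Type) : Type := ∀ A : Ty, Var Γ A → TyA A X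

/-- Evaluation of terms: `t^A γ`. -/
def TmA {Γ : Con} {X : Type} : {A : Ty} → Tm Γ A → ConA Γ X → TyA A X
  | _, .var x, γ => γ _ x
  | _, .app t u, γ => TmA t γ (TmA u γ)

/-- Evaluation of substitutions: `σ^A γ`. -/
def SubA {Γ Δ : Con} {X : Type} (σ : Sub Γ Δ) (γ : ConA Γ X) : ConA Δ X :=
  fun _ x => TmA (σ _ x) γ

/-- Term algebra interpretation of types over a fixed `Ω`: `A^T t`. -/
def TyT (Ω : Con) : (A : Ty) → Tm Ω A → TyA A (Tm Ω Ty.iota)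
  | .iota, t => t
  | .arr A, t => fun u => TyT Ω A (Tm.app t u)

/-- Term algebra interpretation of contexts: `Γ^T ν`. -/
def ConT (Ω Γ : Con) (ν : Sub Ω Γ) : ConA Γ (Tm Ω Ty.iota) :=
  fun A x => TyT Ω A (ν A x)

/-- Morphism (logical relation) interpretation of types: `A^M f`. -/
def TyM : (A : Ty) → {X₀ X₁ : Type} → (X₀ → X₁) → TyA A X₀ → TyA A X₁ → Prop
  | .iota, _, _, f, α₀, α₁ => f α₀ = α₁
  | .arr A, _, _, f, α₀, α₁ => ∀ x, TyM A f (α₀ x) (α₁ (f x))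

/-- Morphism interpretation of contexts: `Γ^M f`. -/
def ConM (Γ : Con) {X₀ X₁ : Type} (f : X₀ → X₁)
    (γ₀ : ConA Γ X₀) (γ₁ : ConA Γ X₁) : Prop :=
  ∀ (A : Ty) (x : Var Γ A), TyM A f (γ₀ A x) (γ₁ A x)

/-- Displayed algebra (logical predicate) interpretation of types: `A^D X^D`. -/
def TyD : (A : Ty) → {X : Type} → (X → Type) → TyA A X → Type
  | .iota, _, XD, α => XD α
  | .arr A, X, XD, α => ∀ x : X, XD x → TyD A XD (α x)

/-- Displayed algebra interpretation of contexts: `Γ^D X^D`. -/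
def ConD (Γ : Con) {X : Type} (XD : X → Type) (γ : ConA Γ X) : Type :=
  ∀ (A : Ty) (x : Var Γ A), TyD A XD (γ A x)

/-- Displayed evaluation of terms: `t^D γ^D`. -/
def TmD {Γ : Con} {X : Type} {XD : X → Type} :
    {A : Ty} → (t : Tm Γ A) → (γ : ConA Γ X) → ConD Γ XD γ → TyD A XD (TmA t γ)
  | _, .var x, _, γD => γD _ x
  | _, .app t u, γ, γD => TmD t γ γD (TmA u γ) (TmD u γ γD)

/-- Section interpretation of types: `A^S X^S`. -/
def TyS : (A : Ty) → {X : Type} → {XD : X → Type} → (XS : ∀ x : X, XD x) →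
    (α : TyA A X) → TyD A XD α → Prop
  | .iota, _, _, XS, α, αD => XS α = αD
  | .arr A, X, _, XS, α, αD => ∀ x : X, TyS A XS (α x) (αD x (XS x))

/-- Section interpretation of contexts: `Γ^S X^S`. -/
def ConS (Γ : Con) {X : Type} {XD : X → Type} (XS : ∀ x : X, XD x)
    (γ : ConA Γ X) (γD : ConD Γ XD γ) : Prop :=
  ∀ (A : Ty) (x : Var Γ A), TyS A XS (γ A x) (γD A x)

/-- Relational interpretation of types: `A^R R`. -/
def TyR : (A : Ty) → {X₀ X₁ : Type} → (X₀ → X₁ → Prop) → TyA A X₀ → TyA A X₁ → Prop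
  | .iota, _, _, R, α₀, α₁ => R α₀ α₁
  | .arr A, X₀, X₁, R, α₀, α₁ => ∀ (x₀ : X₀) (x₁ : X₁), R x₀ x₁ → TyR A R (α₀ x₀) (α₁ x₁)

/-- the term-algebra interpretation commutes with substitution and
evaluation: `A^T (t[ν]) = t^A (Γ^T ν)`. -/
theorem termAlgebra_tm_subst (Ω Γ : Con) (A : Ty) (t : Tm Γ A) (ν : Sub Ω Γ) :
    TyT Ω A (subTm t ν) = TmA t (ConT Ω Γ ν) := by
  induction t with
  | var x => rfl
  | app t u iht ihu =>
    -- `A^T (app t[ν] u[ν])` unfolds to `(ι ⇒ A)^T t[ν] u[ν]`, and `ι^T` is the identity.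
    exact (congrFun iht _).trans (congrArg _ ihu)

end ToS
end

section
/- Fix a context Ω in the simple theory of signatures and let T = Tm Ω ι. For every substitution σ : Sub Γ Δ, every ν : Sub Ω Γ, every type A and every variable x : Var Δ A, the term-algebra interpretation satisfies Δ^T (σ ∘ ν) x = σ^A (Γ^T ν) x; that is, interpreting the composite substitution in the term algebra agrees with evaluating σ in the term-algebra environment Γ^T ν. -/
namespace ToS

theorem tyT_subTm {Ω Γ : Con} (ν : Sub Ω Γ) :
    ∀ {A : Ty} (t : Tm Γ A), TyT Ω A (subTm t ν) = TmA t (ConT Ω Γ ν)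
  | _, .var _ => rfl
  | _, .app t u =>
    -- `(ι ⇒ A)^T t u` unfolds to `A^T (app t u)`, and `ι^T` is the identity.
    calc TyT Ω _ (subTm (.app t u) ν) = TyT Ω (.arr _) (subTm t ν) (TyT Ω .iota (subTm u ν)) :=
          rfl
      _ = TmA (.app t u) (ConT Ω Γ ν) := by rw [tyT_subTm ν t, tyT_subTm ν u, TmA]

/-- `Δ^T (σ ∘ ν) x = σ^A (Γ^T ν) x`. -/
theorem termAlgebra_sub_comp (Ω Γ Δ : Con) (σ : Sub Γ Δ) (ν : Sub Ω Γ)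
    (A : Ty) (x : Var Δ A) :
    ConT Ω Δ (compSub σ ν) A x = SubA σ (ConT Ω Γ ν) A x :=
  tyT_subTm ν (σ A x)

end ToS
end

section
/- Fundamental lemma of the morphism interpretation for substitutions: for every substitution σ : Sub Γ Δ of the simple theory of signatures, every function f : X₀ → X₁ and environments γ₀ : Γ^A X₀, γ₁ : Γ^A X₁, if Γ^M f γ₀ γ₁ holds then Δ^M f (σ^A γ₀) (σ^A γ₁) holds. -/
namespace ToS

theorem fundamental_morphism_tm {Γ : Con} {A : Ty} (t : Tm Γ A)
    {X₀ X₁ : Type} (f : X₀ → X₁) {γ₀ : ConA Γ X₀} {γ₁ : ConA Γ X₁}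
    (hγ : ConM Γ f γ₀ γ₁) : TyM A f (TmA t γ₀) (TmA t γ₁) := by
  induction t with
  | var x => exact hγ _ x
  | app t u iht ihu =>
    have hu : f (TmA u γ₀) = TmA u γ₁ := ihu
    have ht := iht (TmA u γ₀)
    rwa [hu] at ht

/-- fundamental lemma of the morphism interpretation for substitutions. -/
theorem fundamental_morphism_sub (Γ Δ : Con) (σ : Sub Γ Δ)
    {X₀ X₁ : Type} (f : X₀ → X₁) (γ₀ : ConA Γ X₀) (γ₁ : ConA Γ X₁)
    (hγ : ConM Γ f γ₀ γ₁) :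
    ConM Δ f (SubA σ γ₀) (SubA σ γ₁) :=
  fun A x => fundamental_morphism_tm (σ A x) f hγ

end ToS
end

section
/- Fundamental lemma of the section interpretation: for every term t : Tm Γ A of the simple theory of signatures, every type X, family X^D : X → Type, dependent function X^S : ∀ x : X, X^D x, environment γ : Γ^A X and γ^D : Γ^D X^D γ, if Γ^S X^S γ γ^D holds then A^S X^S (t^A γ) (t^D γ^D) holds, where t^D γ^D is the displayed term evaluation. -/
namespace ToS

/-- fundamental lemma of the section interpretation for terms. -/
theorem fundamental_section_tm (Γ : Con) (A : Ty) (t : Tm Γ A)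
    (X : Type) (XD : X → Type) (XS : ∀ x : X, XD x)
    (γ : ConA Γ X) (γD : ConD Γ XD γ)
    (hγ : ConS Γ XS γ γD) :
    TyS A XS (TmA t γ) (TmD t γ γD) := by
  induction t with
  | var x => exact hγ _ x
  | app t u iht ihu =>
    -- `u` has base type, so its section condition is the equation `XS (u^A γ) = u^D γD`.
    have hu : XS (TmA u γ) = TmD u γ γD := ihu
    rw [TmD, ← hu]
    exact iht (TmA u γ)

end ToS
end

section
/- Recursor construction (weak initiality of the term algebra): fix a context Ω of the simple theory of signatures and let T = Tm Ω ι. For every Ω-algebra, i.e., a type X together with ω : Ω^A X, the evaluation map R : T → X defined by R t := t^A ω satisfies Ω^M R (Ω^T id) ω; more generally, for every type A and every t : Tm Ω A, A^M R (A^T t) (t^A ω) holds. Hence for every Ω-algebra there exists an algebra morphism from the term algebra (T, Ω^T id) to it: the term algebra is weakly initial. -/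
/-!
Induct on the type `A`. At `ι` both sides are `t^A ω` by definition. At `ι ⇒ A`, the term
algebra sends an argument `u` to `A^T (app t u)` and evaluation sends `R u` to
`(app t u)^A ω`, so the required statement is the induction hypothesis for `app t u`.
-/

namespace ToS

theorem TyM_TyT_TmA {Ω : Con} {X : Type} (ω : ConA Ω X) :
    ∀ (A : Ty) (t : Tm Ω A),
      TyM A (fun t : Tm Ω Ty.iota => TmA t ω) (TyT Ω A t) (TmA t ω)
  | .iota, _ => rfl
  | .arr A, t => fun u => TyM_TyT_TmA ω A (.app t u)

theorem ConM_ConT_SubA {Ω Γ : Con} {X : Type} (ω : ConA Ω X) (ν : Sub Ω Γ) :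
    ConM Γ (fun t : Tm Ω Ty.iota => TmA t ω) (ConT Ω Γ ν) (SubA ν ω) :=
  fun A x => TyM_TyT_TmA ω A (ν A x)

/-- recursor construction (weak initiality of the term algebra).
For any `Ω`-algebra `(X, ω)`, the evaluation map `R t := t^A ω` satisfies
`A^M R (A^T t) (t^A ω)` for every `A` and `t : Tm Ω A`, in particular
`Ω^M R (Ω^T id) ω`; hence there is an algebra morphism from the term algebra
`(Tm Ω ι, Ω^T id)` to `(X, ω)`. -/
theorem recursor_construction (Ω : Con) (X : Type) (ω : ConA Ω X) :
    (∀ (A : Ty) (t : Tm Ω A),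
      TyM A (fun t : Tm Ω Ty.iota => TmA t ω) (TyT Ω A t) (TmA t ω)) ∧
    ConM Ω (fun t : Tm Ω Ty.iota => TmA t ω) (ConT Ω Ω (idSub Ω)) ω ∧
    ∃ f : Tm Ω Ty.iota → X, ConM Ω f (ConT Ω Ω (idSub Ω)) ω :=
  -- `SubA (idSub Ω) ω` is `ω` up to eta, so the general case applies as is.
  have morphism := ConM_ConT_SubA ω (idSub Ω)
  ⟨TyM_TyT_TmA ω, morphism, _, morphism⟩

end ToS
end

section
/- Eliminator construction (the term algebra supports induction): fix a context Ω of the simple theory of signatures and let T = Tm Ω ι. For every displayed algebra over the term algebra, i.e., a family X^D : T → Type together with ω^D : Ω^D X^D (Ω^T id), there exists a dependent function E : ∀ t : T, X^D t such that Ω^S E (Ω^T id) ω^D holds; that is, every displayed algebra over the term algebra has a section. -/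
/-!
The eliminator is defined by recursion on terms of every type at once: a variable `x` goes to
`ω^D x`, and `app t u` goes to the displayed function of `t` applied to `u` and the value at `u`.
Its section property is proved by induction on the type: at `ι` it holds by definition, and at
`ι ⇒ A` the value at `u` of `(ι ⇒ A)^T t` is `A^T (app t u)`, where the induction hypothesis applies.
-/

namespace ToS

section Eliminator

variable {Ω : Con} (XD : Tm Ω Ty.iota → Type) (ωD : ConD Ω XD (ConT Ω Ω (idSub Ω)))

-- No transports are needed: `TyT Ω (.arr A) t u` and `TyT Ω A (.app t u)` agree definitionally.
def tmElim : {A : Ty} → (t : Tm Ω A) → TyD A XD (TyT Ω A t)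
  | _, .var x => ωD _ x
  | _, .app t u => tmElim t u (tmElim u)

theorem tyS_tmElim (A : Ty) (t : Tm Ω A) :
    TyS A (tmElim XD ωD (A := .iota)) (TyT Ω A t) (tmElim XD ωD t) := by
  induction A with
  | iota => rfl
  | arr A ih => exact fun u => ih (.app t u)

end Eliminator

/-- eliminator construction (the term algebra supports induction):
every displayed algebra `(X^D, ω^D)` over the term algebra `(Tm Ω ι, Ω^T id)`
has a section. -/
theorem eliminator_construction (Ω : Con) (XD : Tm Ω Ty.iota → Type)
    (ωD : ConD Ω XD (ConT Ω Ω (idSub Ω))) :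
    ∃ E : ∀ t : Tm Ω Ty.iota, XD t, ConS Ω E (ConT Ω Ω (idSub Ω)) ωD :=
  ⟨tmElim XD ωD, fun _ x => tyS_tmElim XD ωD _ (.var x)⟩

end ToS
end

section
/- Initiality is equivalent to induction (categorical form): let C be a category with binary products and equalizers. An object X of C is initial if and only if every morphism with codomain X is a split epimorphism, i.e., for every object A and every f : A ⟶ X there exists s : X ⟶ A with s ≫ f = 𝟙 X. (Supporting induction means that every object of the slice category over X admits a section, which is exactly the split-epi condition.) -/
open CategoryTheory Limits

universe v u

namespace CategoryTheory

variable {C : Type u} [Category.{v} C]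

theorem isSplitEpi_iff_exists_section {A X : C} (f : A ⟶ X) :
    IsSplitEpi f ↔ ∃ s : X ⟶ A, s ≫ f = 𝟙 X :=
  ⟨fun ⟨⟨se⟩⟩ => ⟨se.section_, se.id⟩, fun ⟨s, hs⟩ => .mk' ⟨s, hs⟩⟩

namespace Limits

theorem IsInitial.isSplitEpi {A X : C} (hX : IsInitial X) (f : A ⟶ X) : IsSplitEpi f :=
  .mk' ⟨hX.to A, hX.hom_ext _ _⟩

-- The equalizer of `a` and `b` is the paper's identity type `Id a b`.
theorem hom_ext_of_forall_isSplitEpi {X Δ : C} (hX : ∀ (A : C) (f : A ⟶ X), IsSplitEpi f)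
    (a b : X ⟶ Δ) [HasEqualizer a b] : a = b :=
  have := hX _ (equalizer.ι a b)
  eq_of_epi_equalizer

-- The projection `X ⨯ Δ ⟶ X` is the paper's constant family `K Δ`.
noncomputable def homOfForallIsSplitEpi {X : C} (hX : ∀ (A : C) (f : A ⟶ X), IsSplitEpi f)
    (Δ : C) [HasBinaryProduct X Δ] : X ⟶ Δ :=
  have := hX _ (prod.fst : X ⨯ Δ ⟶ X)
  section_ prod.fst ≫ prod.snd

noncomputable def IsInitial.ofForallIsSplitEpi [HasBinaryProducts C] [HasEqualizers C] {X : C}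
    (hX : ∀ (A : C) (f : A ⟶ X), IsSplitEpi f) : IsInitial X :=
  IsInitial.ofUniqueHom (fun Δ => homOfForallIsSplitEpi hX Δ) fun _ _ =>
    hom_ext_of_forall_isSplitEpi hX _ _

end Limits

end CategoryTheory

/-- initiality is equivalent to induction, categorical form:
in a category with binary products and equalizers, an object `X` is initial
iff every morphism with codomain `X` is a split epimorphism. -/
theorem isInitial_iff_every_morphism_splits {C : Type u} [Category.{v} C]
    [HasBinaryProducts C] [HasEqualizers C] (X : C) :
    Nonempty (IsInitial X) ↔ ∀ (A : C) (f : A ⟶ X), ∃ s : X ⟶ A, s ≫ f = 𝟙 X := by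
  simp only [← isSplitEpi_iff_exists_section]
  exact ⟨fun ⟨hX⟩ _ f => hX.isSplitEpi f, fun hX => ⟨IsInitial.ofForallIsSplitEpi hX⟩⟩
end
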